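/- Let J ≥ 1, h > 0, L ≥ 0, and let a_1,…,a_J ∈ ℝ satisfy |a_i − a_{i−1}| ≤ L h for 2 ≤ i ≤ J. Let Δ = diag(a_1,…,a_J) and let A₀ be the J×J tridiagonal matrix with stencil (−1, 2, −1). Then the commutator ΔA₀ − A₀Δ is tridiagonal with zero diagonal and off-diagonal entries bounded in absolute value by L h, and for every x ∈ ℝ^J, ‖(ΔA₀ − A₀Δ) x‖₂ ≤ 2 L h ‖x‖₂. -/

import Mathlib

/-!
Entrywise, `(diag(a) A₀ − A₀ diag(a))ᵢⱼ = (aᵢ − aⱼ) (A₀)ᵢⱼ`: this vanishes on the diagonal and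
off the band, and equals `aⱼ − aᵢ` on the two off-diagonals, where it is bounded by `Lh`.
Every row and every column thus has absolute sum at most `2Lh`, and the Schur test
`‖Cx‖₂² ≤ (max row sum) · (max column sum) · ‖x‖₂²` gives the operator bound.
-/

/-- The `J×J` tridiagonal matrix with stencil `(−1, 2, −1)`. -/
def A0 (J : ℕ) : Matrix (Fin J) (Fin J) ℝ :=
  Matrix.of fun i j =>
    if i = j then 2
    else if (i : ℕ) + 1 = (j : ℕ) ∨ (j : ℕ) + 1 = (i : ℕ) then -1
    else 0

open Finset
open scoped Matrix

theorem Matrix.diagonal_mul_sub_mul_diagonal_apply {n R : Type*} [Fintype n] [DecidableEq n]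
    [CommRing R] (a : n → R) (B : Matrix n n R) (i j : n) :
    (diagonal a * B - B * diagonal a) i j = (a i - a j) * B i j := by
  simp only [sub_apply, diagonal_mul, mul_diagonal]
  ring

theorem sum_sq_mulVec_le_of_sum_abs_le {m n : Type*} [Fintype m] [Fintype n]
    (C : Matrix m n ℝ) {R S : ℝ} (hR₀ : 0 ≤ R) (hR : ∀ i, ∑ j, |C i j| ≤ R)
    (hS : ∀ j, ∑ i, |C i j| ≤ S) (x : n → ℝ) :
    ∑ i, (C *ᵥ x) i ^ 2 ≤ R * S * ∑ j, x j ^ 2 := by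
  have weighted_row (i : m) : (C *ᵥ x) i ^ 2 ≤ (∑ j, |C i j|) * ∑ j, |C i j| * x j ^ 2 := by
    calc (C *ᵥ x) i ^ 2 = |∑ j, C i j * x j| ^ 2 := by rw [sq_abs]; rfl
      _ ≤ (∑ j, |C i j * x j|) ^ 2 := by gcongr; exact abs_sum_le_sum_abs _ _
      _ ≤ _ := sum_sq_le_sum_mul_sum_of_sq_le_mul _ (fun _ _ => abs_nonneg _)
          (fun _ _ => by positivity) fun j _ => le_of_eq <| by rw [abs_mul, mul_pow, sq_abs (x j)]; ring
  calc ∑ i, (C *ᵥ x) i ^ 2 ≤ ∑ i, R * ∑ j, |C i j| * x j ^ 2 := by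
        gcongr with i
        exact (weighted_row i).trans (by gcongr; exact hR i)
    _ = R * ∑ j, (∑ i, |C i j|) * x j ^ 2 := by
        rw [← mul_sum, sum_comm]; simp only [sum_mul]
    _ ≤ R * ∑ j, S * x j ^ 2 := by gcongr with j; exact hS j
    _ = R * S * ∑ j, x j ^ 2 := by rw [← mul_sum, mul_assoc]

theorem sum_abs_le_card_mul_of_eq_zero_of_notMem {ι : Type*} [Fintype ι] {f : ι → ℝ}
    {s : Finset ι} {M : ℝ} (hf : ∀ j ∉ s, f j = 0) (hM : ∀ j ∈ s, |f j| ≤ M) :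
    ∑ j, |f j| ≤ #s * M := by
  rw [← sum_subset (subset_univ s) fun j _ hj => by rw [hf j hj, abs_zero]]
  simpa using sum_le_card_nsmul s _ M hM

def gridNeighbours {J : ℕ} (i : Fin J) : Finset (Fin J) :=
  univ.filter fun j => (i : ℕ) + 1 = j ∨ (j : ℕ) + 1 = i

theorem mem_gridNeighbours_comm {J : ℕ} {i j : Fin J} :
    j ∈ gridNeighbours i ↔ i ∈ gridNeighbours j := by
  simp only [gridNeighbours, mem_filter, mem_univ, true_and, or_comm]

theorem card_gridNeighbours_le {J : ℕ} (i : Fin J) : #(gridNeighbours i) ≤ 2 := by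
  rw [gridNeighbours, filter_or]
  refine (card_union_le _ _).trans (Nat.add_le_add (b := 1) (d := 1) ?_ ?_) <;>
  · refine card_le_one.2 fun j hj k hk => Fin.ext ?_
    simp only [mem_filter] at hj hk
    omega

section Commutator

variable {J : ℕ} (a : Fin J → ℝ)

theorem commutator_A0_apply_of_not_adjacent {i j : Fin J} (h₁ : (i : ℕ) + 1 ≠ j)
    (h₂ : (j : ℕ) + 1 ≠ i) : (Matrix.diagonal a * A0 J - A0 J * Matrix.diagonal a) i j = 0 := by
  rw [Matrix.diagonal_mul_sub_mul_diagonal_apply]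
  by_cases hij : i = j
  · rw [hij, sub_self, zero_mul]
  · simp [A0, hij, h₁, h₂]

theorem abs_commutator_A0_apply_of_adjacent {L h : ℝ}
    (haL : ∀ i j : Fin J, (i : ℕ) + 1 = (j : ℕ) → |a j - a i| ≤ L * h) {i j : Fin J}
    (hij : (i : ℕ) + 1 = j ∨ (j : ℕ) + 1 = i) :
    |(Matrix.diagonal a * A0 J - A0 J * Matrix.diagonal a) i j| ≤ L * h := by
  have hne : i ≠ j := by rintro rfl; omega
  rw [Matrix.diagonal_mul_sub_mul_diagonal_apply]
  simp only [A0, Matrix.of_apply, hne, hij, if_false, if_true, mul_neg_one, abs_neg]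
  rcases hij with hij | hij
  · rw [abs_sub_comm]; exact haL i j hij
  · exact haL j i hij

end Commutator

theorem commutator_diagonal_tridiagonal_bound_general
    (J : ℕ) (h L : ℝ) (hh : 0 < h) (hL : 0 ≤ L)
    (a : Fin J → ℝ)
    (haL : ∀ i j : Fin J, (i : ℕ) + 1 = (j : ℕ) → |a j - a i| ≤ L * h) :
    (∀ i : Fin J, (Matrix.diagonal a * A0 J - A0 J * Matrix.diagonal a) i i = 0) ∧
    (∀ i j : Fin J, (i : ℕ) + 1 ≠ (j : ℕ) → (j : ℕ) + 1 ≠ (i : ℕ) →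
      (Matrix.diagonal a * A0 J - A0 J * Matrix.diagonal a) i j = 0) ∧
    (∀ i j : Fin J, ((i : ℕ) + 1 = (j : ℕ) ∨ (j : ℕ) + 1 = (i : ℕ)) →
      |(Matrix.diagonal a * A0 J - A0 J * Matrix.diagonal a) i j| ≤ L * h) ∧
    (∀ x : Fin J → ℝ,
      Real.sqrt (∑ i, ((Matrix.diagonal a * A0 J - A0 J * Matrix.diagonal a).mulVec x i)^2)
        ≤ 2 * L * h * Real.sqrt (∑ i, (x i)^2)) := by
  set C := Matrix.diagonal a * A0 J - A0 J * Matrix.diagonal a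
  have hLh : 0 ≤ 2 * L * h := by positivity
  have zero_off_band : ∀ i j : Fin J, j ∉ gridNeighbours i → C i j = 0 := fun i j hj => by
    simp only [gridNeighbours, mem_filter, mem_univ, true_and, not_or] at hj
    exact commutator_A0_apply_of_not_adjacent a hj.1 hj.2
  have le_on_band : ∀ i j : Fin J, j ∈ gridNeighbours i → |C i j| ≤ L * h := fun i j hj =>
    abs_commutator_A0_apply_of_adjacent a haL (by simpa [gridNeighbours] using hj)
  have band_sum (i : Fin J) : (#(gridNeighbours i) : ℝ) * (L * h) ≤ 2 * L * h := by
    rw [mul_assoc]; gcongr; exact_mod_cast card_gridNeighbours_le i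
  have row_sum (i : Fin J) : ∑ j, |C i j| ≤ 2 * L * h :=
    (sum_abs_le_card_mul_of_eq_zero_of_notMem (zero_off_band i) (le_on_band i)).trans (band_sum i)
  have col_sum (j : Fin J) : ∑ i, |C i j| ≤ 2 * L * h :=
    (sum_abs_le_card_mul_of_eq_zero_of_notMem (s := gridNeighbours j)
      (fun i hi => zero_off_band i j (mem_gridNeighbours_comm.not.2 hi))
      (fun i hi => le_on_band i j (mem_gridNeighbours_comm.1 hi))).trans (band_sum j)
  refine ⟨fun i => commutator_A0_apply_of_not_adjacent a (by omega) (by omega),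
    fun i j => commutator_A0_apply_of_not_adjacent a,
    fun i j => abs_commutator_A0_apply_of_adjacent a haL, fun x => ?_⟩
  calc √(∑ i, (C *ᵥ x) i ^ 2) ≤ √(2 * L * h * (2 * L * h) * ∑ i, x i ^ 2) :=
        Real.sqrt_le_sqrt (sum_sq_mulVec_le_of_sum_abs_le C hLh row_sum col_sum x)
    _ = 2 * L * h * √(∑ i, x i ^ 2) := by
        rw [Real.sqrt_mul (by positivity), Real.sqrt_mul_self hLh]

/-- The commutator `ΔA₀ − A₀Δ` of the diagonal matrix
`Δ = diag(a)` (with `a` Lipschitz on the grid: `|a_i − a_{i−1}| ≤ Lh`) with the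
tridiagonal matrix `A₀` is tridiagonal with zero diagonal, has off-diagonal
entries bounded by `Lh`, and satisfies `‖(ΔA₀ − A₀Δ)x‖₂ ≤ 2Lh‖x‖₂`. -/
theorem commutator_diagonal_tridiagonal_bound
    (J : ℕ) (hJ : 1 ≤ J) (h L : ℝ) (hh : 0 < h) (hL : 0 ≤ L)
    (a : Fin J → ℝ)
    (haL : ∀ i j : Fin J, (i : ℕ) + 1 = (j : ℕ) → |a j - a i| ≤ L * h) :
    (∀ i : Fin J, (Matrix.diagonal a * A0 J - A0 J * Matrix.diagonal a) i i = 0) ∧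
    (∀ i j : Fin J, (i : ℕ) + 1 ≠ (j : ℕ) → (j : ℕ) + 1 ≠ (i : ℕ) →
      (Matrix.diagonal a * A0 J - A0 J * Matrix.diagonal a) i j = 0) ∧
    (∀ i j : Fin J, ((i : ℕ) + 1 = (j : ℕ) ∨ (j : ℕ) + 1 = (i : ℕ)) →
      |(Matrix.diagonal a * A0 J - A0 J * Matrix.diagonal a) i j| ≤ L * h) ∧
    (∀ x : Fin J → ℝ,
      Real.sqrt (∑ i, ((Matrix.diagonal a * A0 J - A0 J * Matrix.diagonal a).mulVec x i)^2)
        ≤ 2 * L * h * Real.sqrt (∑ i, (x i)^2)) :=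
  commutator_diagonal_tridiagonal_bound_general J h L hh hL a haL
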